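/- Let q be a prime power, let m ≥ 2 and c, h, M be positive integers with c < ((m−1)/m)·M, and let r : 𝔽_q → 𝔽_q be a function. Suppose F_1(X), …, F_m(X) ∈ 𝔽_q[X] each have degree less than cq and are all r-twisted (h, M)-pseudopolynomials, and let k be an integer with k > (M/((m−1)M − mc))·(h + 1). Then there exist polynomials A_1(X), …, A_m(X) ∈ 𝔽_q[X], not all zero, each of degree less than Mq and pseudodegree at most k, such that Σ_{i=1}^{m} A_i(X)·F_i(X) = 0. -/

import Mathlib

open Polynomial

/-- `A ∈ 𝔽_q[X]` has pseudodegree at most `k`: for every `ℓ ≥ 0`, the remainder of the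
`ℓ`-th Hasse derivative of `A` upon division by `Λ(X) = X^q - X` has degree at most `k`. -/
def PdegLE {F : Type*} [Field F] (q : ℕ) (A : F[X]) (k : ℕ) : Prop :=
  ∀ ℓ : ℕ, ((hasseDeriv ℓ A) %ₘ (X ^ q - X)).degree ≤ (k : WithBot ℕ)

/-- `P ∈ 𝔽_q[X]` is an `r`-twisted `(h, M)`-pseudopolynomial: for every `ℓ < M` there is
`U_ℓ ∈ 𝔽_q[X]` of degree at most `h` with `P^{[ℓ]}(α) = r(α)·U_ℓ(α)` for all `α ∈ 𝔽_q`. -/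
def Twisted {F : Type*} [Field F] (r : F → F) (h M : ℕ) (P : F[X]) : Prop :=
  ∀ ℓ < M, ∃ U : F[X], U.degree ≤ (h : WithBot ℕ) ∧
    ∀ α : F, (hasseDeriv ℓ P).eval α = r α * U.eval α

/-!
Write `Λ = X^q - X`, `N = M - c`, and look for `A_i = ∑_{j<N} a_{ij} Λ^j` with `deg a_{ij} ≤ k`.
Translation by `α ∈ 𝔽_q` fixes `Λ`, so the Hasse derivatives of `Λ^j` are constant on `𝔽_q`;
hence each such `A_i` has pseudodegree at most `k`, and on `𝔽_q` every Hasse derivative of `A_i`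
agrees with its remainder modulo `Λ`. By the Leibniz rule, at `α ∈ 𝔽_q` the `ℓ`-th Hasse derivative
of `E = ∑ A_i F_i` is `r(α)` times the value of a polynomial `V_ℓ` of degree at most `k + h`
depending linearly on the `a_{ij}`. Asking `V_ℓ = 0` for `ℓ < M` is `M(k+h+1)` linear conditions on
`mN(k+1)` unknowns, fewer by the choice of `k`, so there is a nonzero solution. Then `E` vanishes to
order `M` at every point of `𝔽_q` while `deg E < Mq`, so `E = 0`; and for `k < q` the `a_{ij}` are
the base-`Λ` digits of `A_i`, so the `A_i` are not all zero. When `k ≥ q` every polynomial has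
pseudodegree at most `k`, and the relation `F_2 · F_1 - F_1 · F_2 = 0` suffices.
-/

namespace Polynomial

section CommRing

variable {R : Type*} [CommRing R]

theorem X_sub_C_pow_dvd_of_hasseDeriv_eval_eq_zero {E : R[X]} {a : R} {M : ℕ}
    (hE : ∀ ℓ < M, (hasseDeriv ℓ E).eval a = 0) : (X - C a) ^ M ∣ E := by
  rw [← map_dvd_iff (taylorEquiv a)]
  change taylor a _ ∣ taylor a _
  rw [taylor_pow, map_sub, taylor_X, taylor_C, add_sub_cancel_right]
  exact X_pow_dvd_iff.2 fun d hd => by rw [taylor_coeff]; exact hE d hd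

theorem degree_hasseDeriv_le (p : R[X]) (n : ℕ) : (hasseDeriv n p).degree ≤ p.degree := by
  rw [degree_le_iff_coeff_zero]
  intro d hd
  rw [hasseDeriv_coeff,
    coeff_eq_zero_of_degree_lt (hd.trans_le (by exact_mod_cast d.le_add_right n)), mul_zero]

theorem degree_sum_mul_lt {ι : Type*} (s : Finset ι) {f g : ι → R[X]} {a b : ℕ}
    (hf : ∀ i, (f i).degree < a) (hg : ∀ i, (g i).degree < b) :
    (∑ i ∈ s, f i * g i).degree < (a + b : ℕ) := by
  refine (degree_sum_le _ _).trans_lt ((Finset.sup_lt_iff (WithBot.bot_lt_coe _)).2 fun i _ => ?_)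
  by_cases h0 : f i = 0
  · rw [h0, zero_mul, degree_zero]
    exact WithBot.bot_lt_coe _
  calc (f i * g i).degree ≤ (f i).degree + (g i).degree := degree_mul_le _ _
    _ < a + b := WithBot.add_lt_add_of_le_of_lt (degree_ne_bot.2 h0) (hf i).le (hg i)
    _ = (a + b : ℕ) := by push_cast; rfl

theorem exists_ne_zero_sum_mul_eq_zero [Nontrivial R] {m : ℕ} (hm : 2 ≤ m) (f : Fin m → R[X])
    {n : WithBot ℕ} (hn : 0 < n) (hf : ∀ i, (f i).degree < n) :
    ∃ A : Fin m → R[X], A ≠ 0 ∧ (∀ i, (A i).degree < n) ∧ ∑ i, A i * f i = 0 := by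
  obtain ⟨m, rfl⟩ : ∃ m', m = m' + 2 := ⟨m - 2, by omega⟩
  have hbot : (⊥ : WithBot ℕ) < n := WithBot.bot_lt_iff_ne_bot.2 hn.ne_bot
  by_cases h0 : f 0 = 0
  · refine ⟨Pi.single 0 1, fun h => one_ne_zero (congrFun h 0), fun i => ?_, ?_⟩
    · rcases eq_or_ne i 0 with rfl | hi
      · simpa using (degree_one_le (R := R)).trans_lt hn
      · rwa [Pi.single_eq_of_ne hi, degree_zero]
    · simp only [Pi.single_apply, ite_mul, one_mul, zero_mul, Finset.sum_ite_eq', Finset.mem_univ,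
        if_true, h0]
  · refine ⟨Pi.single 0 (f 1) - Pi.single 1 (f 0), fun h => h0 ?_, fun i => ?_, ?_⟩
    · have h1 := congrFun h 1
      rwa [Pi.sub_apply, Pi.single_eq_of_ne Fin.zero_lt_one.ne', Pi.single_eq_same, zero_sub,
        Pi.zero_apply, neg_eq_zero] at h1
    · rcases eq_or_ne i 0 with rfl | hi0
      · simpa using hf 1
      rcases eq_or_ne i 1 with rfl | hi1
      · simpa using hf 0
      · rwa [Pi.sub_apply, Pi.single_eq_of_ne hi0, Pi.single_eq_of_ne hi1, sub_zero, degree_zero]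
    · simp only [Pi.sub_apply, sub_mul, Finset.sum_sub_distrib, Pi.single_apply, ite_mul, zero_mul,
        Finset.sum_ite_eq', Finset.mem_univ, if_true]
      ring

end CommRing

section Field

open Finset

variable {F : Type*} [Field F]

theorem finrank_degreeLT (n : ℕ) : Module.finrank F (degreeLT F n) = n := by
  simp [(degreeLTEquiv F n).finrank_eq]

theorem exists_ne_zero_forall_eq_zero_of_degree_lt {V ι : Type*} [AddCommGroup V] [Module F V]
    [FiniteDimensional F V] [Fintype ι] (L : ι → V →ₗ[F] F[X]) {n : ℕ}
    (hL : ∀ i x, (L i x).degree < n) (hdim : Fintype.card ι * n < Module.finrank F V) :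
    ∃ x ≠ 0, ∀ i, L i x = 0 := by
  let T : V →ₗ[F] (ι × Fin n → F) := LinearMap.pi fun p => (lcoeff F p.2).comp (L p.1)
  have hT : Module.finrank F (ι × Fin n → F) < Module.finrank F V := by simpa using hdim
  obtain ⟨x, hx, hx0⟩ := (Submodule.ne_bot_iff _).1 (LinearMap.ker_ne_bot_of_finrank_lt hT)
  refine ⟨x, hx0, fun i => ext fun d => ?_⟩
  rcases lt_or_ge d n with hd | hd
  · have hTx : T x = 0 := LinearMap.mem_ker.1 hx
    simpa [T] using congrFun hTx (i, ⟨d, hd⟩)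
  · exact coeff_eq_zero_of_degree_lt ((hL i x).trans_le (by exact_mod_cast hd))

noncomputable def expandInPowers (p : F[X]) (N n : ℕ) : (Fin N → degreeLT F n) →ₗ[F] F[X] where
  toFun a := ∑ j, (a j : F[X]) * p ^ (j : ℕ)
  map_add' a b := by simp [add_mul, sum_add_distrib]
  map_smul' c a := by simp [smul_sum]

theorem expandInPowers_apply (p : F[X]) {N n : ℕ} (a : Fin N → degreeLT F n) :
    expandInPowers p N n a = ∑ j, (a j : F[X]) * p ^ (j : ℕ) := rfl

theorem expandInPowers_succ (p : F[X]) {N n : ℕ} (a : Fin (N + 1) → degreeLT F n) :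
    expandInPowers p (N + 1) n a = a 0 + p * expandInPowers p N n (Fin.tail a) := by
  simp only [expandInPowers_apply, Fin.sum_univ_succ, Fin.coe_ofNat_eq_mod, Nat.zero_mod, pow_zero,
    mul_one, Fin.val_succ, pow_succ, Fin.tail, mul_sum, add_right_inj]
  refine sum_congr rfl fun j _ => ?_
  ring

theorem degree_expandInPowers_lt {p : F[X]} {N n : ℕ} (hn : n ≤ p.natDegree)
    (a : Fin N → degreeLT F n) : (expandInPowers p N n a).degree < (N * p.natDegree : ℕ) := by
  rw [← mem_degreeLT, expandInPowers_apply]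
  refine Submodule.sum_mem _ fun j _ => ?_
  rw [mem_degreeLT]
  by_cases h0 : (a j : F[X]) * p ^ (j : ℕ) = 0
  · rw [h0, degree_zero]; exact WithBot.bot_lt_coe _
  have ha : (a j : F[X]).natDegree < n :=
    (natDegree_lt_iff_degree_lt (left_ne_zero_of_mul h0)).2 (mem_degreeLT.1 (a j).2)
  have hj : (j : ℕ) + 1 ≤ N := j.2
  rw [degree_eq_natDegree h0]
  refine WithBot.coe_lt_coe.2 (natDegree_mul_le.trans_lt ?_)
  calc (a j : F[X]).natDegree + (p ^ (j : ℕ)).natDegree < p.natDegree + j * p.natDegree :=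
        add_lt_add_of_lt_of_le (ha.trans_le hn) natDegree_pow_le
    _ ≤ N * p.natDegree := by nlinarith

theorem expandInPowers_injective {p : F[X]} (hp : p ≠ 0) {n : ℕ} (hn : n ≤ p.natDegree) :
    ∀ N, Function.Injective (expandInPowers p N n)
  | 0 => Function.injective_of_subsingleton _
  | N + 1 => by
    refine (injective_iff_map_eq_zero _).2 fun a ha => ?_
    rw [expandInPowers_succ] at ha
    have hdvd : p ∣ (a 0 : F[X]) :=
      ⟨-expandInPowers p N n (Fin.tail a), by linear_combination ha⟩
    have h0 : (a 0 : F[X]) = 0 := by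
      refine eq_zero_of_dvd_of_degree_lt hdvd ?_
      exact (mem_degreeLT.1 (a 0).2).trans_le ((WithBot.coe_le_coe.2 hn).trans_eq
        (degree_eq_natDegree hp).symm)
    rw [h0, zero_add, mul_eq_zero, or_iff_right hp,
      map_eq_zero_iff _ (expandInPowers_injective hp hn N)] at ha
    funext i
    cases i using Fin.cases with
    | zero => exact Submodule.coe_eq_zero.1 h0
    | succ j => exact congrFun ha j

end Field

section FiniteField

open Finset

variable {F : Type*} [Field F] [Fintype F]

theorem monic_X_pow_card_sub_X : (X ^ Fintype.card F - X : F[X]).Monic :=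
  monic_X_pow_sub (by rw [degree_X]; exact_mod_cast Fintype.one_lt_card)

theorem natDegree_X_pow_card_sub_X : (X ^ Fintype.card F - X : F[X]).natDegree = Fintype.card F :=
  FiniteField.X_pow_card_sub_X_natDegree_eq F Fintype.one_lt_card

theorem degree_X_pow_card_sub_X : (X ^ Fintype.card F - X : F[X]).degree = Fintype.card F := by
  rw [degree_eq_natDegree monic_X_pow_card_sub_X.ne_zero, natDegree_X_pow_card_sub_X]

theorem eval_modByMonic_X_pow_card_sub_X (p : F[X]) (a : F) :
    (p %ₘ (X ^ Fintype.card F - X)).eval a = p.eval a := by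
  simpa using aeval_modByMonic_eq_self_of_root (p := p) (x := a) (by simp [FiniteField.pow_card])

theorem modByMonic_X_pow_card_sub_X_eq_of_eval_eq {p p' : F[X]} (h : ∀ a, p.eval a = p'.eval a) :
    p %ₘ (X ^ Fintype.card F - X) = p' %ₘ (X ^ Fintype.card F - X) := by
  have hlt (f : F[X]) : (f %ₘ (X ^ Fintype.card F - X)).degree < #(univ : Finset F) := by
    simpa [degree_X_pow_card_sub_X] using degree_modByMonic_lt f monic_X_pow_card_sub_X
  refine eq_of_degrees_lt_of_eval_finset_eq _ (hlt p) (hlt p') fun a _ => ?_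
  simp only [eval_modByMonic_X_pow_card_sub_X, h]

theorem taylor_X_pow_card_sub_X (a : F) :
    taylor a (X ^ Fintype.card F - X) = X ^ Fintype.card F - X := by
  rw [map_sub, taylor_X_pow, taylor_X, ← FiniteField.expand_card]
  simp

theorem eval_hasseDeriv_X_pow_card_sub_X_pow (a : F) (j t : ℕ) :
    (hasseDeriv t ((X ^ Fintype.card F - X) ^ j)).eval a =
      ((X ^ Fintype.card F - X : F[X]) ^ j).coeff t := by
  rw [← taylor_coeff, taylor_pow, taylor_X_pow_card_sub_X]

theorem eq_zero_of_forall_hasseDeriv_eval_eq_zero {E : F[X]} {M : ℕ}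
    (hE : ∀ a : F, ∀ ℓ < M, (hasseDeriv ℓ E).eval a = 0)
    (hdeg : E.degree < (M * Fintype.card F : ℕ)) : E = 0 := by
  have hdvd : ∏ a : F, (X - C a) ^ M ∣ E :=
    Fintype.prod_dvd_of_coprime
      (fun a b hab => (pairwise_coprime_X_sub_C Function.injective_id hab).pow)
      fun a => X_sub_C_pow_dvd_of_hasseDeriv_eval_eq_zero (hE a)
  refine eq_zero_of_dvd_of_degree_lt hdvd (hdeg.trans_le ?_)
  simp [degree_prod, mul_comm]

end FiniteField

end Polynomial

section Pseudodegree

open Finset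

variable {F : Type*} [Field F]

theorem pdegLE_sum {ι : Type*} {q k : ℕ} (s : Finset ι) {f : ι → F[X]}
    (h : ∀ i ∈ s, PdegLE q (f i) k) : PdegLE q (∑ i ∈ s, f i) k := by
  intro ℓ
  rw [← mem_degreeLE, map_sum, ← modByMonicHom_apply, map_sum]
  exact Submodule.sum_mem _ fun i hi => mem_degreeLE.2 (h i hi ℓ)

theorem Twisted.exists_seq {r : F → F} {h M : ℕ} {P : F[X]} (hP : Twisted r h M P) :
    ∃ U : ℕ → F[X], (∀ b, (U b).degree ≤ h) ∧
      ∀ b < M, ∀ α, (hasseDeriv b P).eval α = r α * (U b).eval α := by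
  classical
  refine ⟨fun b => if hb : b < M then (hP b hb).choose else 0, fun b => ?_, fun b hb α => ?_⟩
  · dsimp only
    split_ifs with hb
    exacts [(hP b hb).choose_spec.1, by simp]
  · simpa only [dif_pos hb] using (hP b hb).choose_spec.2 α

variable [Fintype F]

theorem pdegLE_of_card_le {k : ℕ} (hk : Fintype.card F ≤ k) (P : F[X]) :
    PdegLE (Fintype.card F) P k := fun _ =>
  (degree_modByMonic_lt _ monic_X_pow_card_sub_X).le.trans
    (by rw [degree_X_pow_card_sub_X]; exact_mod_cast hk)

theorem pdegLE_mul_X_pow_card_sub_X_pow {a : F[X]} {k : ℕ} (ha : a.degree ≤ k) (j : ℕ) :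
    PdegLE (Fintype.card F) (a * (X ^ Fintype.card F - X) ^ j) k := by
  intro ℓ
  set B := ∑ x ∈ antidiagonal ℓ, ((X ^ Fintype.card F - X : F[X]) ^ j).coeff x.2 • hasseDeriv x.1 a
  have hB : B.degree ≤ k := mem_degreeLE.1 <| Submodule.sum_mem _ fun x _ =>
    Submodule.smul_mem _ _ (mem_degreeLE.2 ((degree_hasseDeriv_le _ _).trans ha))
  rw [modByMonic_X_pow_card_sub_X_eq_of_eval_eq (p' := B) fun α => ?_]
  · exact degree_modByMonic_le_left.trans hB
  · simp [B, hasseDeriv_mul, eval_finsetSum, eval_hasseDeriv_X_pow_card_sub_X_pow, mul_comm]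

theorem pdegLE_expandInPowers {N k : ℕ}
    (a : Fin N → degreeLT F (k + 1)) :
    PdegLE (Fintype.card F) (expandInPowers (X ^ Fintype.card F - X) N (k + 1) a) k := by
  rw [expandInPowers_apply]
  refine pdegLE_sum _ fun j _ => pdegLE_mul_X_pow_card_sub_X_pow ?_ j
  rw [← mem_degreeLE, ← degreeLT_succ_eq_degreeLE]
  exact (a j).2

theorem exists_ne_zero_hasseDeriv_eval_sum_mul_eq_zero {V : Type*} [AddCommGroup V] [Module F V]
    [FiniteDimensional F V] {m h M k : ℕ} {r : F → F} {P : Fin m → F[X]}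
    (hP : ∀ i, Twisted r h M (P i)) (A : Fin m → V →ₗ[F] F[X])
    (hA : ∀ i x, PdegLE (Fintype.card F) (A i x) k)
    (hdim : M * (k + h + 1) < Module.finrank F V) :
    ∃ x ≠ 0, ∀ α, ∀ ℓ < M, (hasseDeriv ℓ (∑ i, A i x * P i)).eval α = 0 := by
  choose U hUdeg hU using fun i => (hP i).exists_seq
  let L : Fin M → V →ₗ[F] F[X] := fun ℓ => ∑ i, ∑ sb ∈ antidiagonal (ℓ : ℕ),
    LinearMap.mulRight F (U i sb.2) ∘ₗ modByMonicHom (X ^ Fintype.card F - X) ∘ₗ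
      hasseDeriv sb.1 ∘ₗ A i
  have hL : ∀ ℓ x, (L ℓ x).degree < (k + h + 1 : ℕ) := fun ℓ x => by
    rw [← mem_degreeLT, degreeLT_succ_eq_degreeLE]
    simp only [L, LinearMap.sum_apply, LinearMap.comp_apply]
    refine Submodule.sum_mem _ fun i _ => Submodule.sum_mem _ fun sb _ => mem_degreeLE.2 ?_
    refine (degree_mul_le _ _).trans ?_
    exact_mod_cast add_le_add (hA i x sb.1) (hUdeg i sb.2)
  obtain ⟨x, hx0, hLx⟩ := exists_ne_zero_forall_eq_zero_of_degree_lt L hL (by simpa using hdim)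
  refine ⟨x, hx0, fun α ℓ hℓ => ?_⟩
  calc (hasseDeriv ℓ (∑ i, A i x * P i)).eval α = r α * (L ⟨ℓ, hℓ⟩ x).eval α := by
        simp only [L, map_sum, eval_finsetSum, mul_sum, LinearMap.sum_apply, LinearMap.comp_apply]
        refine sum_congr rfl fun i _ => ?_
        rw [hasseDeriv_mul, eval_finsetSum]
        refine sum_congr rfl fun sb hsb => ?_
        have hb : sb.2 < M := by have := mem_antidiagonal.1 hsb; omega
        simp only [eval_mul, hU i sb.2 hb, modByMonicHom_apply, LinearMap.mulRight_apply,
          eval_modByMonic_X_pow_card_sub_X]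
        ring
    _ = 0 := by rw [hLx, eval_zero, mul_zero]

theorem exists_pdegLE_sum_mul_eq_zero_of_lt_card {m c h M k N : ℕ} {r : F → F}
    {P : Fin m → F[X]} (hPdeg : ∀ i, (P i).degree < (c * Fintype.card F : ℕ))
    (hP : ∀ i, Twisted r h M (P i)) (hkq : k < Fintype.card F) (hNcM : N + c ≤ M)
    (hdim : M * (k + h + 1) < m * (N * (k + 1))) :
    ∃ A : Fin m → F[X], A ≠ 0 ∧ (∀ i, (A i).degree < (N * Fintype.card F : ℕ)) ∧
      (∀ i, PdegLE (Fintype.card F) (A i) k) ∧ ∑ i, A i * P i = 0 := by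
  have hΛ : (X ^ Fintype.card F - X : F[X]).natDegree = Fintype.card F :=
    natDegree_X_pow_card_sub_X
  have hk : k + 1 ≤ (X ^ Fintype.card F - X : F[X]).natDegree := by rw [hΛ]; exact hkq
  let A : Fin m → (Fin m → Fin N → degreeLT F (k + 1)) →ₗ[F] F[X] := fun i =>
    expandInPowers (X ^ Fintype.card F - X) N (k + 1) ∘ₗ LinearMap.proj i
  have hAdeg (i x) : (A i x).degree < (N * Fintype.card F : ℕ) := by
    rw [← hΛ]; exact degree_expandInPowers_lt hk (x i)
  have hApdeg (i x) : PdegLE (Fintype.card F) (A i x) k := pdegLE_expandInPowers (x i)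
  obtain ⟨x, hx0, hvanish⟩ := exists_ne_zero_hasseDeriv_eval_sum_mul_eq_zero hP A hApdeg
    (by simpa [Module.finrank_pi_fintype, finrank_degreeLT] using hdim)
  refine ⟨fun i => A i x, fun hA => hx0 (funext fun i => ?_), (hAdeg · x), (hApdeg · x),
    eq_zero_of_forall_hasseDeriv_eval_eq_zero hvanish ?_⟩
  · exact (map_eq_zero_iff _ (expandInPowers_injective monic_X_pow_card_sub_X.ne_zero hk N)).1
      (congrFun hA i)
  · refine (degree_sum_mul_lt _ (hAdeg · x) hPdeg).trans_le ?_
    exact_mod_cast (by nlinarith : N * Fintype.card F + c * Fintype.card F ≤ M * Fintype.card F)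

end Pseudodegree

theorem stmt15_general {F : Type*} [Field F] [Fintype F] (q : ℕ) (hq : Fintype.card F = q)
    (m c h M : ℕ) (hm : 2 ≤ m)
    (hcM : (c : ℝ) < ((m : ℝ) - 1) / (m : ℝ) * (M : ℝ))
    (r : F → F) (Fi : Fin m → F[X])
    (hFdeg : ∀ i, (Fi i).degree < ((c * q : ℕ) : WithBot ℕ))
    (hFtw : ∀ i, Twisted r h M (Fi i))
    (k : ℕ)
    (hk : (M : ℝ) / (((m : ℝ) - 1) * (M : ℝ) - (m : ℝ) * (c : ℝ)) * ((h : ℝ) + 1) < (k : ℝ)) :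
    ∃ A : Fin m → F[X], (¬ ∀ i, A i = 0) ∧
      (∀ i, (A i).degree < ((M * q : ℕ) : WithBot ℕ)) ∧
      (∀ i, PdegLE q (A i) k) ∧
      ∑ i, A i * Fi i = 0 := by
  subst hq
  have hm0 : (0 : ℝ) < m := by exact_mod_cast (by omega : 0 < m)
  rw [div_mul_eq_mul_div, lt_div_iff₀ hm0] at hcM
  have hD : (0 : ℝ) < (m - 1) * M - m * c := by linarith
  have hcM' : c < M := by exact_mod_cast (by nlinarith : (c : ℝ) < M)
  rcases lt_or_ge k (Fintype.card F) with hkq | hkq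
  · rw [div_mul_eq_mul_div, div_lt_iff₀ hD] at hk
    have hdim : M * (k + h + 1) < m * ((M - c) * (k + 1)) := by
      -- the gap is `D (k + 1) - M h` with `D = (m - 1) M - m c`, and `M h < M (h + 1) < k D`
      have : (M : ℝ) * (k + h + 1) < m * ((M - c) * (k + 1)) := by nlinarith
      have hcast : ((M * (k + h + 1) : ℕ) : ℝ) < (m * ((M - c) * (k + 1)) : ℕ) := by
        push_cast [Nat.cast_sub hcM'.le]; exact this
      exact_mod_cast hcast
    obtain ⟨A, hA0, hAdeg, hApdeg, hsum⟩ :=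
      exists_pdegLE_sum_mul_eq_zero_of_lt_card hFdeg hFtw hkq (Nat.sub_add_cancel hcM'.le).le hdim
    exact ⟨A, fun h => hA0 (funext h),
      fun i => (hAdeg i).trans_le (by exact_mod_cast Nat.mul_le_mul_right _ (Nat.sub_le M c)),
      hApdeg, hsum⟩
  · have hFdeg' (i) : (Fi i).degree < (M * Fintype.card F : ℕ) :=
      (hFdeg i).trans_le (by exact_mod_cast Nat.mul_le_mul_right _ hcM'.le)
    obtain ⟨A, hA0, hAdeg, hsum⟩ := exists_ne_zero_sum_mul_eq_zero hm Fi
      (by exact_mod_cast Nat.mul_pos ((Nat.zero_le c).trans_lt hcM') Fintype.card_pos) hFdeg'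
    exact ⟨A, fun h => hA0 (funext h), hAdeg, fun i => pdegLE_of_card_le hkq _, hsum⟩

/-- Let `m ≥ 2`, `c, h, M` positive, `c < ((m-1)/m)·M`, and let
`F_1, …, F_m ∈ 𝔽_q[X]` each of degree `< cq` all be `r`-twisted `(h, M)`-pseudopolynomials.
Let `k > (M/((m-1)M - mc))·(h+1)`. Then there exist `A_1, …, A_m ∈ 𝔽_q[X]`, not all zero,
each of degree `< Mq` and pseudodegree at most `k`, with `Σ_i A_i·F_i = 0`. -/
theorem stmt15 {F : Type*} [Field F] [Fintype F] (q : ℕ) (hq : Fintype.card F = q)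
    (m c h M : ℕ) (hm : 2 ≤ m) (hc : 0 < c) (hh : 0 < h) (hM : 0 < M)
    (hcM : (c : ℝ) < ((m : ℝ) - 1) / (m : ℝ) * (M : ℝ))
    (r : F → F) (Fi : Fin m → F[X])
    (hFdeg : ∀ i, (Fi i).degree < ((c * q : ℕ) : WithBot ℕ))
    (hFtw : ∀ i, Twisted r h M (Fi i))
    (k : ℕ)
    (hk : (M : ℝ) / (((m : ℝ) - 1) * (M : ℝ) - (m : ℝ) * (c : ℝ)) * ((h : ℝ) + 1) < (k : ℝ)) :
    ∃ A : Fin m → F[X], (¬ ∀ i, A i = 0) ∧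
      (∀ i, (A i).degree < ((M * q : ℕ) : WithBot ℕ)) ∧
      (∀ i, PdegLE q (A i) k) ∧
      ∑ i, A i * Fi i = 0 :=
  stmt15_general q hq m c h M hm hcM r Fi hFdeg hFtw k hk
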